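/- For every bounded linear operator A on a complex Hilbert space, w(A)^2 ≤ (1/2)‖A‖² + (1/2)w(|A| |A*|). -/

import Mathlib

open ContinuousLinearMap

variable {H : Type*} [NormedAddCommGroup H] [InnerProductSpace ℂ H] [CompleteSpace H]

noncomputable def numRadius (A : H →L[ℂ] H) : ℝ :=
  ⨆ x : {x : H // ‖x‖ = 1}, ‖(inner ℂ (A x) (x : H) : ℂ)‖

noncomputable def absOp (A : H →L[ℂ] H) : H →L[ℂ] H := CFC.sqrt (adjoint A * A)

section Auxiliary

open RCLike Polynomial

set_option linter.unusedSectionVars false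
set_option synthInstance.maxHeartbeats 1000000
set_option maxHeartbeats 1600000

-- Buzano's inequality
lemma buzano (u v x : H) (hx : ‖x‖ = 1) :
    ‖(inner ℂ u x : ℂ) * inner ℂ x v‖ ≤ (‖u‖ * ‖v‖ + ‖(inner ℂ u v : ℂ)‖) / 2 := by
  obtain ⟨p, hp⟩ : ∃ p, p = (inner ℂ x v : ℂ) • x := ⟨_, rfl⟩
  have h1 : (inner ℂ u x : ℂ) * inner ℂ x v = inner ℂ u p := by
    rw [hp, inner_smul_right]; ring
  have hnp : ‖(2:ℂ) • p - v‖ = ‖v‖ := by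
    have h2 : ‖(2:ℂ) • p - v‖ ^ 2 = ‖v‖ ^ 2 := by
      rw [@norm_sub_sq ℂ]
      have hpp : ‖(2:ℂ) • p‖ = 2 * ‖(inner ℂ x v : ℂ)‖ := by
        simp [hp, norm_smul, hx]
      have hre : RCLike.re (inner ℂ ((2:ℂ) • p) v : ℂ) = 2 * ‖(inner ℂ x v : ℂ)‖ ^ 2 := by
        rw [inner_smul_left, hp, inner_smul_left]
        have h5 : (starRingEnd ℂ) (inner ℂ x v : ℂ) * (inner ℂ x v : ℂ) = (‖(inner ℂ x v : ℂ)‖ : ℂ) ^ 2 :=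
          RCLike.conj_mul _
        rw [h5]
        norm_num [← Complex.ofReal_pow, ← Complex.ofReal_ofNat, ← Complex.ofReal_mul]
      rw [hpp, hre]; ring
    have := congrArg Real.sqrt h2
    rwa [Real.sqrt_sq (norm_nonneg _), Real.sqrt_sq (norm_nonneg _)] at this
  have h3 : (inner ℂ u p : ℂ) = ((inner ℂ u ((2:ℂ) • p - v) : ℂ) + inner ℂ u v) / 2 := by
    rw [inner_sub_right, inner_smul_right]; ring
  rw [h1, h3]
  have h4 : ‖(inner ℂ u ((2:ℂ) • p - v) : ℂ)‖ ≤ ‖u‖ * ‖v‖ := by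
    calc ‖(inner ℂ u ((2:ℂ) • p - v) : ℂ)‖ ≤ ‖u‖ * ‖(2:ℂ) • p - v‖ := norm_inner_le_norm _ _
      _ = ‖u‖ * ‖v‖ := by rw [hnp]
  have h6 : ‖(inner ℂ u ((2:ℂ) • p - v) : ℂ) + inner ℂ u v‖ ≤ ‖u‖ * ‖v‖ + ‖(inner ℂ u v : ℂ)‖ := by
    refine (norm_add_le _ _).trans ?_
    gcongr
  calc ‖((inner ℂ u ((2:ℂ) • p - v) : ℂ) + inner ℂ u v) / 2‖
      = ‖(inner ℂ u ((2:ℂ) • p - v) : ℂ) + inner ℂ u v‖ / 2 := by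
        rw [norm_div]; norm_num
    _ ≤ (‖u‖ * ‖v‖ + ‖(inner ℂ u v : ℂ)‖) / 2 := by linarith

lemma intertwine_pow {R : Type*} [Ring R] {a b c : R} (h : a * b = c * a) :
    ∀ n : ℕ, a * b ^ n = c ^ n * a := by
  intro n
  induction n with
  | zero => simp
  | succ n ih =>
    rw [pow_succ, pow_succ, ← mul_assoc, ih, mul_assoc, h, ← mul_assoc]

lemma intertwine_poly {R : Type*} [CommSemiring R] {A : Type*} [Ring A] [Algebra R A]
    {a b c : A} (h : a * b = c * a) (p : R[X]) :
    a * aeval b p = aeval c p * a := by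
  induction p using Polynomial.induction_on with
  | C r => rw [aeval_C, aeval_C]; exact (Algebra.commutes r a).symm
  | add p q hp hq => simp [mul_add, add_mul, hp, hq]
  | monomial n r ih =>
    simp only [map_mul, aeval_C, aeval_X_pow]
    calc a * (algebraMap R A r * b ^ (n+1)) = algebraMap R A r * (a * b ^ (n+1)) := by
          rw [← mul_assoc, ← Algebra.commutes r a, mul_assoc]
      _ = algebraMap R A r * (c ^ (n+1) * a) := by rw [intertwine_pow h]
      _ = algebraMap R A r * c ^ (n+1) * a := by rw [mul_assoc]

lemma intertwine_cfc {a b c : H →L[ℂ] H} (hb : IsSelfAdjoint b) (hc : IsSelfAdjoint c)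
    (h : a * b = c * a) {f : ℝ → ℝ} (hf : Continuous f) :
    a * cfc f b = cfc f c * a := by
  have key : ∀ ε > (0:ℝ), ‖a * cfc f b - cfc f c * a‖ ≤ ε * (2 * ‖a‖) := by
    intro ε hε
    set R : ℝ := max ‖b‖ ‖c‖ with hR
    have hsb : spectrum ℝ b ⊆ Set.Icc (-R) R := by
      intro t ht
      have h1 := spectrum.norm_le_norm_mul_of_mem ht
      rw [Real.norm_eq_abs] at h1
      have h2 : ‖(1 : H →L[ℂ] H)‖ ≤ 1 := by rw [ContinuousLinearMap.one_def]; exact norm_id_le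
      have : |t| ≤ R := le_trans (h1.trans (mul_le_of_le_one_right (norm_nonneg _) h2)) (le_max_left _ _)
      exact abs_le.mp this
    have hsc : spectrum ℝ c ⊆ Set.Icc (-R) R := by
      intro t ht
      have h1 := spectrum.norm_le_norm_mul_of_mem ht
      rw [Real.norm_eq_abs] at h1
      have h2 : ‖(1 : H →L[ℂ] H)‖ ≤ 1 := by rw [ContinuousLinearMap.one_def]; exact norm_id_le
      have : |t| ≤ R := le_trans (h1.trans (mul_le_of_le_one_right (norm_nonneg _) h2)) (le_max_right _ _)
      exact abs_le.mp this
    obtain ⟨p, hp⟩ := exists_polynomial_near_of_continuousOn (-R) R f hf.continuousOn ε hε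
    have hb1 : ‖cfc f b - cfc (fun t => p.eval t) b‖ ≤ ε := by
      rw [← cfc_sub f (fun t => p.eval t) b]
      refine norm_cfc_le hε.le fun t ht => ?_
      rw [Real.norm_eq_abs, abs_sub_comm]
      exact (hp t (hsb ht)).le
    have hc1 : ‖cfc (fun t => p.eval t) c - cfc f c‖ ≤ ε := by
      rw [← cfc_sub (fun t => p.eval t) f c]
      refine norm_cfc_le hε.le fun t ht => ?_
      rw [Real.norm_eq_abs]
      exact (hp t (hsc ht)).le
    have hkey : a * cfc (fun t => p.eval t) b = cfc (fun t => p.eval t) c * a := by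
      rw [cfc_polynomial p b hb, cfc_polynomial p c hc]
      exact intertwine_poly h p
    calc ‖a * cfc f b - cfc f c * a‖
        = ‖a * (cfc f b - cfc (fun t => p.eval t) b)
            + (cfc (fun t => p.eval t) c - cfc f c) * a‖ := by
          rw [mul_sub, sub_mul, hkey]; abel
      _ ≤ ‖a * (cfc f b - cfc (fun t => p.eval t) b)‖
            + ‖(cfc (fun t => p.eval t) c - cfc f c) * a‖ := norm_add_le _ _
      _ ≤ ‖a‖ * ε + ε * ‖a‖ := by
          refine add_le_add ((norm_mul_le _ _).trans ?_) ((norm_mul_le _ _).trans ?_)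
          · exact mul_le_mul_of_nonneg_left hb1 (norm_nonneg a)
          · exact mul_le_mul_of_nonneg_right hc1 (norm_nonneg a)
      _ = ε * (2 * ‖a‖) := by ring
  have h0 : ‖a * cfc f b - cfc f c * a‖ ≤ 0 := by
    refine le_of_forall_pos_le_add fun δ hδ => ?_
    have h2 : (0:ℝ) < 2 * ‖a‖ + 1 := by positivity
    calc ‖a * cfc f b - cfc f c * a‖ ≤ (δ / (2 * ‖a‖ + 1)) * (2 * ‖a‖) :=
          key _ (by positivity)
      _ ≤ δ := by
          rw [div_mul_eq_mul_div, div_le_iff₀ h2]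
          nlinarith [norm_nonneg a, hδ.le]
      _ ≤ 0 + δ := by linarith
  exact sub_eq_zero.mp (norm_le_zero_iff.mp h0)

lemma sqrt_eq_cfc {b : H →L[ℂ] H} (hb : 0 ≤ b) : CFC.sqrt b = cfc Real.sqrt b := by
  have hsa : IsSelfAdjoint b := hb.isSelfAdjoint
  have hnn : 0 ≤ cfc Real.sqrt b := cfc_nonneg fun t _ => Real.sqrt_nonneg t
  refine CFC.sqrt_unique ?_ hnn
  rw [← cfc_mul Real.sqrt Real.sqrt b]
  have : (spectrum ℝ b).EqOn (fun t => Real.sqrt t * Real.sqrt t) id := fun t ht =>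
    Real.mul_self_sqrt (spectrum_nonneg_of_nonneg hb ht)
  rw [cfc_congr this, cfc_id ℝ b]

lemma symm_inner {P : H →L[ℂ] H} (hP : IsSelfAdjoint P) (w z : H) :
    (inner ℂ (P w) z : ℂ) = inner ℂ w (P z) := by
  have := adjoint_inner_left P z w
  rwa [isSelfAdjoint_iff'.mp hP] at this

-- Kato / mixed Schwarz inequality at a unit vector
lemma kato (A : H →L[ℂ] H) (x : H) (hx : ‖x‖ = 1) :
    ‖(inner ℂ (A x) x : ℂ)‖ ^ 2 ≤
      re (inner ℂ ((cfc Real.sqrt (adjoint A * A)) x) x : ℂ) *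
        re (inner ℂ ((cfc Real.sqrt (A * adjoint A)) x) x : ℂ) := by
  set b : H →L[ℂ] H := adjoint A * A with hbdef
  set c : H →L[ℂ] H := A * adjoint A with hcdef
  have hb0 : 0 ≤ b := by
    simpa [hbdef, star_eq_adjoint] using star_mul_self_nonneg A
  have hc0 : 0 ≤ c := by
    have := star_mul_self_nonneg (adjoint A)
    simpa [hcdef, star_eq_adjoint, adjoint_adjoint] using this
  have hbsa : IsSelfAdjoint b := hb0.isSelfAdjoint
  have hcsa : IsSelfAdjoint c := hc0.isSelfAdjoint
  have hABC : A * b = c * A := by rw [hbdef, hcdef, mul_assoc]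
  set S : H →L[ℂ] H := cfc Real.sqrt b with hSdef
  set T : H →L[ℂ] H := cfc Real.sqrt c with hTdef
  have hTpos : IsPositive T :=
    (nonneg_iff_isPositive T).mp (cfc_nonneg fun t _ => Real.sqrt_nonneg t)
  have hTnn : 0 ≤ re (inner ℂ (T x) x : ℂ) := hTpos.re_inner_nonneg_left x
  -- the ε-approximation step
  have main : ∀ ε > (0:ℝ), ‖(inner ℂ (A x) x : ℂ)‖ ^ 2 ≤
      (re (inner ℂ (S x) x : ℂ) + ε) * re (inner ℂ (T x) x : ℂ) := by
    intro ε hε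
    have hsqrt_pos : ∀ t : ℝ, 0 < Real.sqrt t + ε := fun t =>
      lt_of_lt_of_le hε (le_add_of_nonneg_left (Real.sqrt_nonneg t))
    set u : ℝ → ℝ := fun t => Real.sqrt (Real.sqrt t + ε) with hudef
    set v : ℝ → ℝ := fun t => (Real.sqrt (Real.sqrt t + ε))⁻¹ with hvdef
    set w : ℝ → ℝ := fun t => t * ((Real.sqrt t + ε)⁻¹) with hwdef
    have hu_pos : ∀ t, 0 < u t := fun t => Real.sqrt_pos.mpr (hsqrt_pos t)
    have hu_cont : Continuous u := (Real.continuous_sqrt.add continuous_const).sqrt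
    have hv_cont : Continuous v := hu_cont.inv₀ fun t => (hu_pos t).ne'
    have hw_cont : Continuous w :=
      continuous_id.mul ((Real.continuous_sqrt.add continuous_const).inv₀
        fun t => (hsqrt_pos t).ne')
    set C : H →L[ℂ] H := A * cfc v b with hCdef
    have hub_sa : IsSelfAdjoint (cfc u b) := cfc_predicate u b
    have hvb_sa : IsSelfAdjoint (cfc v b) := cfc_predicate v b
    -- C * cfc u b = A
    have hCu : C * cfc u b = A := by
      rw [hCdef, mul_assoc, ← cfc_mul v u b hv_cont.continuousOn hu_cont.continuousOn]
      have h7 : (spectrum ℝ b).EqOn (fun t => v t * u t) (1 : ℝ → ℝ) := fun t _ => by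
        simp only [hvdef, hudef]
        exact inv_mul_cancel₀ (hu_pos t).ne'
      rw [cfc_congr h7, cfc_one ℝ b, mul_one]
    -- ⟪Ax, x⟫ = ⟪(cfc u b) x, (adjoint C) x⟫
    have hinner : (inner ℂ (A x) x : ℂ) = inner ℂ ((cfc u b) x) ((adjoint C) x) := by
      rw [adjoint_inner_right, ← ContinuousLinearMap.mul_apply, hCu]
    -- ‖(cfc u b) x‖² = re⟪Sx,x⟫ + ε
    have hnorm_u : ‖(cfc u b) x‖ ^ 2 = re (inner ℂ (S x) x : ℂ) + ε := by
      have h1 : (inner ℂ ((cfc u b) x) ((cfc u b) x) : ℂ)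
          = inner ℂ (((cfc u b) * (cfc u b)) x) x := by
        rw [ContinuousLinearMap.mul_apply, ← symm_inner hub_sa]
      have h2 : (cfc u b) * (cfc u b) = S + (algebraMap ℝ (H →L[ℂ] H)) ε := by
        rw [← cfc_mul u u b hu_cont.continuousOn hu_cont.continuousOn]
        have h8 : (spectrum ℝ b).EqOn (fun t => u t * u t)
            (fun t => Real.sqrt t + ε) := fun t _ => by
          simp only [hudef]
          exact Real.mul_self_sqrt (hsqrt_pos t).le
        rw [cfc_congr h8, cfc_add (a := b) Real.sqrt (fun _ => ε) Real.continuous_sqrt.continuousOn continuousOn_const, hSdef, cfc_const ε b hbsa]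
      rw [← @inner_self_eq_norm_sq ℂ, h1, h2]
      rw [ContinuousLinearMap.add_apply, inner_add_left, map_add]
      congr 1
      rw [Algebra.algebraMap_eq_smul_one, ← algebraMap_smul ℂ ε (1 : (H →L[ℂ] H)), coe_smul',
        Pi.smul_apply, ContinuousLinearMap.one_apply, inner_smul_left, RCLike.algebraMap_eq_ofReal, conj_ofReal,
        re_ofReal_mul, inner_self_eq_norm_sq, hx]
      norm_num
    -- ‖(adjoint C) x‖² ≤ re⟪Tx,x⟫
    have hnorm_C : ‖(adjoint C) x‖ ^ 2 ≤ re (inner ℂ (T x) x : ℂ) := by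
      have h1 : (inner ℂ ((adjoint C) x) ((adjoint C) x) : ℂ) = inner ℂ ((C * adjoint C) x) x := by
        rw [ContinuousLinearMap.mul_apply]
        exact adjoint_inner_right C _ x
      have hadj : adjoint C = cfc v b * adjoint A := by
        rw [hCdef, ← star_eq_adjoint, star_mul, hvb_sa.star_eq, star_eq_adjoint]
      have h2 : C * adjoint C = cfc w c := by
        have hvv : A * cfc (fun t => v t * v t) b = cfc (fun t => v t * v t) c * A :=
          intertwine_cfc hbsa hcsa hABC (hv_cont.mul hv_cont)
        calc C * adjoint C = A * (cfc v b * cfc v b) * adjoint A := by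
              rw [hCdef, hadj]; simp only [mul_assoc]
          _ = A * cfc (fun t => v t * v t) b * adjoint A := by rw [cfc_mul v v b hv_cont.continuousOn hv_cont.continuousOn]
          _ = cfc (fun t => v t * v t) c * (A * adjoint A) := by rw [hvv, mul_assoc]
          _ = cfc (fun t => v t * v t) c * cfc id c := by rw [← hcdef, cfc_id ℝ c hcsa]
          _ = cfc (fun t => (v t * v t) * t) c := by
              rw [← cfc_mul (fun t => v t * v t) id c (hv_cont.mul hv_cont).continuousOn continuousOn_id]
              rfl
          _ = cfc w c := by
              refine cfc_congr fun t _ => ?_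
              simp only [hvdef, hwdef]
              rw [← Real.sqrt_inv, Real.mul_self_sqrt (by positivity)]
              ring
      have h3 : cfc w c ≤ T := by
        refine cfc_mono (fun t ht => ?_) hw_cont.continuousOn Real.continuous_sqrt.continuousOn
        have ht0 : 0 ≤ t := spectrum_nonneg_of_nonneg hc0 ht
        simp only [hwdef]
        rw [← div_eq_mul_inv, div_le_iff₀ (hsqrt_pos t)]
        nlinarith [Real.sq_sqrt ht0, Real.sqrt_nonneg t, hε.le]
      have h4 : re (inner ℂ ((cfc w c) x) x : ℂ) ≤ re (inner ℂ (T x) x : ℂ) := by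
        have h5 := ((le_def _ _).mp h3).inner_nonneg_left x
        rw [ContinuousLinearMap.sub_apply, inner_sub_left] at h5
        have h6 := (Complex.le_def.mp h5).1
        rw [Complex.zero_re, Complex.sub_re] at h6
        exact sub_nonneg.mp h6
      calc ‖(adjoint C) x‖ ^ 2 = re (inner ℂ ((adjoint C) x) ((adjoint C) x) : ℂ) :=
            (@inner_self_eq_norm_sq ℂ _ _ _ _ _).symm
        _ = re (inner ℂ ((cfc w c) x) x : ℂ) := by rw [h1, h2]
        _ ≤ re (inner ℂ (T x) x : ℂ) := h4
    -- combine
    have hb1 : ‖(inner ℂ (A x) x : ℂ)‖ ≤ ‖(cfc u b) x‖ * ‖(adjoint C) x‖ := by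
      rw [hinner]; exact norm_inner_le_norm _ _
    calc ‖(inner ℂ (A x) x : ℂ)‖ ^ 2 ≤ (‖(cfc u b) x‖ * ‖(adjoint C) x‖) ^ 2 := by
          exact pow_le_pow_left₀ (norm_nonneg _) hb1 2
      _ = ‖(cfc u b) x‖ ^ 2 * ‖(adjoint C) x‖ ^ 2 := by ring
      _ ≤ (re (inner ℂ (S x) x : ℂ) + ε) * re (inner ℂ (T x) x : ℂ) := by
          rw [hnorm_u]
          have h9 : 0 ≤ re (inner ℂ (S x) x : ℂ) + ε := by
            rw [← hnorm_u]; positivity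
          exact mul_le_mul_of_nonneg_left hnorm_C h9
  -- let ε → 0
  refine le_of_forall_pos_le_add fun δ hδ => ?_
  have h2 : (0:ℝ) < re (inner ℂ (T x) x : ℂ) + 1 := by linarith
  have h3 := main (δ / (re (inner ℂ (T x) x : ℂ) + 1)) (by positivity)
  have h4 : (δ / (re (inner ℂ (T x) x : ℂ) + 1)) * re (inner ℂ (T x) x : ℂ) ≤ δ := by
    rw [div_mul_eq_mul_div, div_le_iff₀ h2]
    nlinarith [hδ.le]
  nlinarith [h3, h4]

lemma numRadius_nonneg (B : H →L[ℂ] H) : 0 ≤ numRadius B :=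
  Real.iSup_nonneg fun _ => norm_nonneg _

lemma le_numRadius (B : H →L[ℂ] H) {x : H} (hx : ‖x‖ = 1) :
    ‖(inner ℂ (B x) x : ℂ)‖ ≤ numRadius B := by
  have hbdd : BddAbove (Set.range fun y : {y : H // ‖y‖ = 1} =>
      ‖(inner ℂ (B y) (y : H) : ℂ)‖) := by
    refine ⟨‖B‖, ?_⟩
    rintro r ⟨⟨y, hy⟩, rfl⟩
    calc ‖(inner ℂ (B y) (y : H) : ℂ)‖ ≤ ‖B y‖ * ‖y‖ := norm_inner_le_norm _ _
      _ ≤ ‖B‖ * ‖y‖ * ‖y‖ := by gcongr; exact le_opNorm B y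
      _ = ‖B‖ := by rw [hy]; ring
  exact le_ciSup hbdd (⟨x, hx⟩ : {y : H // ‖y‖ = 1})

theorem stmt9 (A : H →L[ℂ] H) :
    numRadius A ^ 2 ≤ (1 / 2) * ‖A‖ ^ 2 + (1 / 2) * numRadius (absOp A * absOp (adjoint A)) := by
  have hb0 : 0 ≤ adjoint A * A := by
    simpa [star_eq_adjoint] using star_mul_self_nonneg A
  have hc0 : 0 ≤ A * adjoint A := by
    have := star_mul_self_nonneg (adjoint A)
    simpa [star_eq_adjoint, adjoint_adjoint] using this
  set S : H →L[ℂ] H := absOp A with hSdef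
  set T : H →L[ℂ] H := absOp (adjoint A) with hTdef
  have hS0 : 0 ≤ S := by rw [hSdef, absOp]; exact CFC.sqrt_nonneg _
  have hT0 : 0 ≤ T := by rw [hTdef, absOp]; exact CFC.sqrt_nonneg _
  have hSsa : IsSelfAdjoint S := hS0.isSelfAdjoint
  have hTsa : IsSelfAdjoint T := hT0.isSelfAdjoint
  have hS_eq : S = cfc Real.sqrt (adjoint A * A) := sqrt_eq_cfc hb0
  have hT_eq : T = cfc Real.sqrt (A * adjoint A) := by
    rw [hTdef, absOp, adjoint_adjoint]; exact sqrt_eq_cfc hc0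
  -- operator norms
  have hSnorm : ‖S‖ ≤ ‖A‖ := by
    have h1 : S * S = adjoint A * A := CFC.sqrt_mul_sqrt_self _ hb0
    have h2 : ‖S‖ * ‖S‖ = ‖A‖ * ‖A‖ := by
      rw [← CStarRing.norm_star_mul_self (x := S), hSsa.star_eq, h1,
        ← star_eq_adjoint, CStarRing.norm_star_mul_self]
    nlinarith [norm_nonneg S, norm_nonneg A]
  have hTnorm : ‖T‖ ≤ ‖A‖ := by
    have h1 : T * T = A * adjoint A := by
      have := CFC.sqrt_mul_sqrt_self _ hc0
      rwa [hTdef, absOp, adjoint_adjoint]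
    have h2 : ‖T‖ * ‖T‖ = ‖A‖ * ‖A‖ := by
      rw [← CStarRing.norm_star_mul_self (x := T), hTsa.star_eq, h1]
      have : ‖(star (adjoint A) : H →L[ℂ] H) * adjoint A‖ = ‖adjoint A‖ * ‖adjoint A‖ :=
        CStarRing.norm_star_mul_self
      rw [star_eq_adjoint, adjoint_adjoint] at this
      rw [this, (adjoint : (H →L[ℂ] H) ≃ₗᵢ⋆[ℂ] (H →L[ℂ] H)).norm_map A]
    nlinarith [norm_nonneg T, norm_nonneg A]
  set K : ℝ := (1 / 2) * ‖A‖ ^ 2 + (1 / 2) * numRadius (S * T) with hKdef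
  have hK0 : 0 ≤ K := by
    have := numRadius_nonneg (S * T)
    positivity
  -- pointwise bound
  have hpt : ∀ x : H, ‖x‖ = 1 → ‖(inner ℂ (A x) x : ℂ)‖ ^ 2 ≤ K := by
    intro x hx
    have h1 := kato A x hx
    rw [← hS_eq, ← hT_eq] at h1
    have hSre := ((isPositive_iff_complex S).mp ((nonneg_iff_isPositive S).mp hS0) x)
    have hTre := ((isPositive_iff_complex T).mp ((nonneg_iff_isPositive T).mp hT0) x)
    have h2 : re (inner ℂ (S x) x : ℂ) * re (inner ℂ (T x) x : ℂ)
        = ‖(inner ℂ (S x) x : ℂ) * inner ℂ x (T x)‖ := by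
      have h3 : (inner ℂ x (T x) : ℂ) = (re (inner ℂ (T x) x : ℂ) : ℂ) := by
        rw [← inner_conj_symm, ← hTre.1]
        simp [conj_ofReal]
      conv_rhs => rw [← hSre.1, h3, ← Complex.ofReal_mul]
      rw [Complex.norm_real, Real.norm_eq_abs,
        abs_of_nonneg (mul_nonneg hSre.2 hTre.2)]
    have h4 := buzano (S x) (T x) x hx
    have h5 : ‖(inner ℂ (S x) (T x) : ℂ)‖ ≤ numRadius (S * T) := by
      rw [symm_inner hSsa x (T x), ← ContinuousLinearMap.mul_apply]
      rw [← norm_inner_symm]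
      exact le_numRadius _ hx
    have h6 : ‖S x‖ * ‖T x‖ ≤ ‖A‖ ^ 2 := by
      calc ‖S x‖ * ‖T x‖ ≤ (‖S‖ * ‖x‖) * (‖T‖ * ‖x‖) :=
            mul_le_mul (le_opNorm S x) (le_opNorm T x) (norm_nonneg _)
              (by positivity)
        _ = ‖S‖ * ‖T‖ := by rw [hx]; ring
        _ ≤ ‖A‖ * ‖A‖ := mul_le_mul hSnorm hTnorm (norm_nonneg _) (norm_nonneg _)
        _ = ‖A‖ ^ 2 := by ring
    calc ‖(inner ℂ (A x) x : ℂ)‖ ^ 2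
        ≤ re (inner ℂ (S x) x : ℂ) * re (inner ℂ (T x) x : ℂ) := h1
      _ = ‖(inner ℂ (S x) x : ℂ) * inner ℂ x (T x)‖ := h2
      _ ≤ (‖S x‖ * ‖T x‖ + ‖(inner ℂ (S x) (T x) : ℂ)‖) / 2 := h4
      _ ≤ (‖A‖ ^ 2 + numRadius (S * T)) / 2 := by gcongr
      _ = K := by rw [hKdef]; ring
  -- conclude
  have hle : numRadius A ≤ Real.sqrt K := by
    refine Real.iSup_le (fun y => ?_) (Real.sqrt_nonneg K)
    obtain ⟨x, hx⟩ := y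
    rw [show ((⟨x, hx⟩ : {y : H // ‖y‖ = 1}) : H) = x from rfl]
    rw [Real.le_sqrt (norm_nonneg _)]
    · exact hpt x hx
    · exact hK0
  calc numRadius A ^ 2 ≤ Real.sqrt K ^ 2 :=
        pow_le_pow_left₀ (numRadius_nonneg A) hle 2
    _ = K := Real.sq_sqrt hK0

end Auxiliary
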